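/- arXiv:2511.21915 — 6 statements merged into one kernel-verified Lean document; each statement's English description precedes it below -/
import Mathlib

section
/- Let h : ℝ → [0,∞) satisfy the metric-map condition |h(s₁) − h(s₂)| ≤ |s₁ − s₂| for all s₁, s₂ ∈ ℝ, and let s⁻, s⁺ ∈ ℝ with s⁻ < s⁺. Define ŝ := (s⁻ + s⁺ + h(s⁻) − h(s⁺))/2. Then: (i) ŝ minimizes t ↦ sup_{s ∈ [s⁻, s⁺]} (|s − t| − h(s)) over all t ∈ ℝ, and the minimal value equals (s⁺ − s⁻ − h(s⁻) − h(s⁺))/2; (ii) consequently, |s − ŝ| ≤ h(s) holds for all s ∈ [s⁻, s⁺] if and only if s⁺ − s⁻ ≤ h(s⁻) + h(s⁺). -/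
theorem stmt_0 (h : ℝ → ℝ) (hnonneg : ∀ s : ℝ, 0 ≤ h s)
    (hmetric : ∀ s₁ s₂ : ℝ, |h s₁ - h s₂| ≤ |s₁ - s₂|)
    (sm sp : ℝ) (hlt : sm < sp) :
    (∀ t : ℝ,
      sSup ((fun s => |s - (sm + sp + h sm - h sp) / 2| - h s) '' Set.Icc sm sp) ≤
        sSup ((fun s => |s - t| - h s) '' Set.Icc sm sp)) ∧
    (sSup ((fun s => |s - (sm + sp + h sm - h sp) / 2| - h s) '' Set.Icc sm sp) =
      (sp - sm - h sm - h sp) / 2) ∧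
    ((∀ s ∈ Set.Icc sm sp, |s - (sm + sp + h sm - h sp) / 2| ≤ h s) ↔
      sp - sm ≤ h sm + h sp) := by
  set sh := (sm + sp + h sm - h sp) / 2 with hsh
  set M := (sp - sm - h sm - h sp) / 2 with hM
  have hsm_mem : sm ∈ Set.Icc sm sp := ⟨le_refl _, hlt.le⟩
  have hsp_mem : sp ∈ Set.Icc sm sp := ⟨hlt.le, le_refl _⟩
  have h1 : |h sm - h sp| ≤ sp - sm := by
    have := hmetric sm sp
    rwa [show |sm - sp| = sp - sm by rw [abs_sub_comm]; exact abs_of_nonneg (by linarith)] at this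
  have h1' := abs_le.1 h1
  have hsm_val : |sm - sh| - h sm = M := by
    rw [hsh, hM, abs_of_nonpos (by linarith)]; ring
  have hsp_val : |sp - sh| - h sp = M := by
    rw [hsh, hM, abs_of_nonneg (by linarith)]; ring
  have habove : ∀ s ∈ Set.Icc sm sp, |s - sh| - h s ≤ M := by
    intro s hs
    obtain ⟨hs1, hs2⟩ := hs
    rcases le_total s sh with hle | hle
    · have hL := (abs_le.1 (hmetric sm s)).2
      have habs : |sm - s| = s - sm := by rw [abs_sub_comm]; exact abs_of_nonneg (by linarith)
      rw [habs] at hL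
      rw [abs_of_nonpos (by linarith)]
      have hsm0 : |sm - sh| = sh - sm := by
        rw [abs_sub_comm]; exact abs_of_nonneg (by rw [hsh]; linarith)
      rw [hsm0] at hsm_val
      linarith
    · have hL := (abs_le.1 (hmetric sp s)).2
      have habs : |sp - s| = sp - s := abs_of_nonneg (by linarith)
      rw [habs] at hL
      rw [abs_of_nonneg (by linarith)]
      have hsp0 : |sp - sh| = sp - sh := abs_of_nonneg (by rw [hsh]; linarith)
      rw [hsp0] at hsp_val
      linarith
  have hcontH : Continuous h := by
    have : LipschitzWith 1 h := LipschitzWith.of_dist_le_mul (fun x y => by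
      simpa [Real.dist_eq, one_mul] using hmetric x y)
    exact this.continuous
  have hbdd : ∀ t : ℝ, BddAbove ((fun s => |s - t| - h s) '' Set.Icc sm sp) := by
    intro t
    exact IsCompact.bddAbove_image isCompact_Icc
      (((continuous_abs.comp (continuous_id.sub continuous_const)).sub hcontH).continuousOn)
  have himg_ne : ((fun s => |s - sh| - h s) '' Set.Icc sm sp).Nonempty :=
    ⟨_, sm, hsm_mem, rfl⟩
  have hsup_eq : sSup ((fun s => |s - sh| - h s) '' Set.Icc sm sp) = M := by
    apply le_antisymm
    · apply csSup_le himg_ne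
      rintro x ⟨s, hs, rfl⟩
      exact habove s hs
    · exact le_csSup (hbdd sh) ⟨sm, hsm_mem, hsm_val⟩
  refine ⟨?_, hsup_eq, ?_⟩
  · intro t
    rw [hsup_eq]
    have hb1 : t - sm ≤ |sm - t| := by
      have := neg_abs_le (sm - t); linarith
    have hb2 : sp - t ≤ |sp - t| := le_abs_self _
    rcases le_total (|sm - t| - h sm) (|sp - t| - h sp) with hc | hc
    · have : M ≤ |sp - t| - h sp := by rw [hM]; linarith
      exact this.trans (le_csSup (hbdd t) ⟨sp, hsp_mem, rfl⟩)
    · have : M ≤ |sm - t| - h sm := by rw [hM]; linarith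
      exact this.trans (le_csSup (hbdd t) ⟨sm, hsm_mem, rfl⟩)
  · constructor
    · intro H
      have := H sm hsm_mem
      have hM0 : M ≤ 0 := by linarith [hsm_val]
      rw [hM] at hM0; linarith
    · intro H s hs
      have := habove s hs
      have hM0 : M ≤ 0 := by rw [hM]; linarith
      linarith
end

section
/- Fix natural numbers q ≤ p. Suppose that for each m with q ≤ m ≤ p we are given a matrix V_m ∈ ℂ^{2^m × 2^m} that is unitary with conj(V_m) V_m = I, and that for each q ≤ m < p the block recursion conj(V_{m+1}) = (1/√2) [[conj(V_m), diag(w_m) conj(V_m)], [conj(V_m), −diag(w_m) conj(V_m)]] holds for some vector w_m ∈ ℂ^{2^m}. Then every entry (i, j) of conj(V_p) (I_{2^{p−q}} ⊗ V_q) with i ≢ j (mod 2^q) is zero (indices taken 0-based). Consequently, if K = (I_{2^{p−q}} ⊗ V_q) Λ conj(V_q) for some Λ ∈ ℂ^{2^p × 2^q} with Λ_{ij} = 0 whenever i ≢ j (mod 2^q), then K = V_p Λ̃ conj(V_q) for some Λ̃ ∈ ℂ^{2^p × 2^q} with Λ̃_{ij} = 0 whenever i ≢ j (mod 2^q). -/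
open Matrix

noncomputable section

def sumEquiv (m : ℕ) : Fin (2 ^ m) ⊕ Fin (2 ^ m) ≃ Fin (2 ^ (m + 1)) :=
  finSumFinEquiv.trans (finCongr (by ring))

def blockKron (p q : ℕ) (Vq : Matrix (Fin (2 ^ q)) (Fin (2 ^ q)) ℂ) :
    Matrix (Fin (2 ^ p)) (Fin (2 ^ p)) ℂ :=
  Matrix.of fun i j =>
    if (i : ℕ) / 2 ^ q = (j : ℕ) / 2 ^ q then
      Vq ⟨(i : ℕ) % 2 ^ q, Nat.mod_lt _ (Nat.two_pow_pos q)⟩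
        ⟨(j : ℕ) % 2 ^ q, Nat.mod_lt _ (Nat.two_pow_pos q)⟩
    else 0

lemma sumEquiv_inl (m : ℕ) (a : Fin (2 ^ m)) :
    ((sumEquiv m (Sum.inl a)) : ℕ) = a := by
  simp [sumEquiv]

lemma sumEquiv_inr (m : ℕ) (a : Fin (2 ^ m)) :
    ((sumEquiv m (Sum.inr a)) : ℕ) = 2 ^ m + a := by
  simp [sumEquiv]; omega

lemma hk_pow (q m : ℕ) (hq : q ≤ m) : 2 ^ m = 2 ^ q * 2 ^ (m - q) := by
  rw [← pow_add]; congr 1; omega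

lemma hdiv (q m : ℕ) (hq : q ≤ m) (c : ℕ) :
    (2 ^ m + c) / 2 ^ q = 2 ^ (m - q) + c / 2 ^ q := by
  rw [hk_pow q m hq, Nat.mul_add_div (Nat.two_pow_pos q)]

lemma hmod (q m : ℕ) (hq : q ≤ m) (c : ℕ) :
    (2 ^ m + c) % 2 ^ q = c % 2 ^ q := by
  rw [hk_pow q m hq, Nat.mul_add_mod]

lemma blockKron_succ (q m : ℕ) (hq : q ≤ m) (Vq : Matrix (Fin (2 ^ q)) (Fin (2 ^ q)) ℂ) :
    blockKron (m + 1) q Vq = Matrix.reindex (sumEquiv m) (sumEquiv m)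
      (Matrix.fromBlocks (blockKron m q Vq) 0 0 (blockKron m q Vq)) := by
  ext i j
  obtain ⟨i₀, rfl⟩ := (sumEquiv m).surjective i
  obtain ⟨j₀, rfl⟩ := (sumEquiv m).surjective j
  rw [reindex_apply, submatrix_apply, Equiv.symm_apply_apply, Equiv.symm_apply_apply]
  have h2q : 0 < 2 ^ q := Nat.two_pow_pos q
  cases i₀ with
  | inl a =>
    cases j₀ with
    | inl b => simp [blockKron, sumEquiv_inl]
    | inr b =>
      have hne : (a : ℕ) / 2 ^ q ≠ (2 ^ m + (b : ℕ)) / 2 ^ q := by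
        have h1 : (a : ℕ) / 2 ^ q < 2 ^ (m - q) := by
          rw [Nat.div_lt_iff_lt_mul h2q, mul_comm, ← hk_pow q m hq]; exact a.isLt
        rw [hdiv q m hq]
        exact Nat.ne_of_lt (lt_of_lt_of_le h1 (Nat.le_add_right _ _))
      simp [blockKron, sumEquiv_inl, sumEquiv_inr, hne]
  | inr a =>
    cases j₀ with
    | inl b =>
      have hne : (2 ^ m + (a : ℕ)) / 2 ^ q ≠ (b : ℕ) / 2 ^ q := by
        have h1 : (b : ℕ) / 2 ^ q < 2 ^ (m - q) := by
          rw [Nat.div_lt_iff_lt_mul h2q, mul_comm, ← hk_pow q m hq]; exact b.isLt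
        rw [hdiv q m hq]
        exact Nat.ne_of_gt (lt_of_lt_of_le h1 (Nat.le_add_right _ _))
      simp [blockKron, sumEquiv_inl, sumEquiv_inr, hne]
    | inr b =>
      simp only [blockKron, sumEquiv_inr, of_apply, fromBlocks_apply₂₂,
        hdiv q m hq, hmod q m hq, add_right_inj]

lemma blockKron_base (q : ℕ) (Vq : Matrix (Fin (2 ^ q)) (Fin (2 ^ q)) ℂ) :
    blockKron q q Vq = Vq := by
  ext i j
  have hi : (i : ℕ) % 2 ^ q = i := Nat.mod_eq_of_lt i.isLt
  have hj : (j : ℕ) % 2 ^ q = j := Nat.mod_eq_of_lt j.isLt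
  have hdi : (i : ℕ) / 2 ^ q = 0 := Nat.div_eq_of_lt i.isLt
  have hdj : (j : ℕ) / 2 ^ q = 0 := Nat.div_eq_of_lt j.isLt
  simp only [blockKron, of_apply, hdi, hdj, if_true]
  congr 1 <;> exact Fin.ext (by simp [hi, hj])

lemma key (p q : ℕ) (hqp : q ≤ p)
    (V : (m : ℕ) → Matrix (Fin (2 ^ m)) (Fin (2 ^ m)) ℂ)
    (hunit : ∀ m, q ≤ m → m ≤ p → (V m).map (starRingEnd ℂ) * V m = 1)
    (hrec : ∀ m, q ≤ m → m < p → ∃ w : Fin (2 ^ m) → ℂ,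
      (V (m + 1)).map (starRingEnd ℂ) =
        ((Real.sqrt 2 : ℝ) : ℂ)⁻¹ •
          (Matrix.reindex (sumEquiv m) (sumEquiv m)
            (Matrix.fromBlocks
              ((V m).map (starRingEnd ℂ))
              (Matrix.diagonal w * (V m).map (starRingEnd ℂ))
              ((V m).map (starRingEnd ℂ))
              (-(Matrix.diagonal w * (V m).map (starRingEnd ℂ)))))) :
    ∀ m, q ≤ m → m ≤ p → ∀ i j : Fin (2 ^ m), (i : ℕ) % 2 ^ q ≠ (j : ℕ) % 2 ^ q →
      ((V m).map (starRingEnd ℂ) * blockKron m q (V q)) i j = 0 := by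
  intro m hqm
  induction m, hqm using Nat.le_induction with
  | base =>
    intro _ i j hij
    rw [blockKron_base, hunit q le_rfl hqp]
    have hne : i ≠ j := fun h => hij (by rw [h])
    simp [Matrix.one_apply, hne]
  | succ m hqm ih =>
    intro hmp i j hij
    have hm : m < p := hmp
    obtain ⟨w, hw⟩ := hrec m hqm hm
    rw [hw, blockKron_succ q m hqm, smul_mul_assoc]
    have hmul : (Matrix.reindex (sumEquiv m) (sumEquiv m)
          (Matrix.fromBlocks
            ((V m).map (starRingEnd ℂ))
            (Matrix.diagonal w * (V m).map (starRingEnd ℂ))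
            ((V m).map (starRingEnd ℂ))
            (-(Matrix.diagonal w * (V m).map (starRingEnd ℂ))))) *
        (Matrix.reindex (sumEquiv m) (sumEquiv m)
          (Matrix.fromBlocks (blockKron m q (V q)) 0 0 (blockKron m q (V q)))) =
        Matrix.reindex (sumEquiv m) (sumEquiv m)
          (Matrix.fromBlocks
            ((V m).map (starRingEnd ℂ) * blockKron m q (V q))
            (Matrix.diagonal w * ((V m).map (starRingEnd ℂ) * blockKron m q (V q)))
            ((V m).map (starRingEnd ℂ) * blockKron m q (V q))
            (-(Matrix.diagonal w * ((V m).map (starRingEnd ℂ) * blockKron m q (V q))))) := by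
      rw [Matrix.reindex_apply, Matrix.reindex_apply, Matrix.submatrix_mul_equiv,
        Matrix.fromBlocks_multiply]
      rw [Matrix.reindex_apply]
      simp [Matrix.mul_assoc]
    rw [hmul]
    obtain ⟨i₀, rfl⟩ := (sumEquiv m).surjective i
    obtain ⟨j₀, rfl⟩ := (sumEquiv m).surjective j
    rw [Matrix.smul_apply, Matrix.reindex_apply, Matrix.submatrix_apply,
      Equiv.symm_apply_apply, Equiv.symm_apply_apply]
    have ihm := ih (le_of_lt hm)
    cases i₀ with
    | inl a =>
      cases j₀ with
      | inl b =>
        rw [Matrix.fromBlocks_apply₁₁, ihm a b (by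
          rwa [sumEquiv_inl, sumEquiv_inl] at hij), smul_zero]
      | inr b =>
        rw [Matrix.fromBlocks_apply₁₂, Matrix.diagonal_mul, ihm a b (by
          rw [sumEquiv_inl, sumEquiv_inr, hmod q m hqm] at hij; exact hij),
          mul_zero, smul_zero]
    | inr a =>
      cases j₀ with
      | inl b =>
        rw [Matrix.fromBlocks_apply₂₁, ihm a b (by
          rw [sumEquiv_inr, sumEquiv_inl, hmod q m hqm] at hij; exact hij), smul_zero]
      | inr b =>
        rw [Matrix.fromBlocks_apply₂₂, Matrix.neg_apply, Matrix.diagonal_mul,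
          ihm a b (by
            rw [sumEquiv_inr, sumEquiv_inr, hmod q m hqm, hmod q m hqm] at hij; exact hij),
          mul_zero, neg_zero, smul_zero]

theorem stmt_1 (p q : ℕ) (hqp : q ≤ p)
    (V : (m : ℕ) → Matrix (Fin (2 ^ m)) (Fin (2 ^ m)) ℂ)
    (hunit : ∀ m, q ≤ m → m ≤ p → (V m).map (starRingEnd ℂ) * V m = 1)
    (hrec : ∀ m, q ≤ m → m < p → ∃ w : Fin (2 ^ m) → ℂ,
      (V (m + 1)).map (starRingEnd ℂ) =
        ((Real.sqrt 2 : ℝ) : ℂ)⁻¹ •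
          (Matrix.reindex (sumEquiv m) (sumEquiv m)
            (Matrix.fromBlocks
              ((V m).map (starRingEnd ℂ))
              (Matrix.diagonal w * (V m).map (starRingEnd ℂ))
              ((V m).map (starRingEnd ℂ))
              (-(Matrix.diagonal w * (V m).map (starRingEnd ℂ)))))) :
    (∀ i j : Fin (2 ^ p), (i : ℕ) % 2 ^ q ≠ (j : ℕ) % 2 ^ q →
      ((V p).map (starRingEnd ℂ) * blockKron p q (V q)) i j = 0) ∧
    (∀ Λ : Matrix (Fin (2 ^ p)) (Fin (2 ^ q)) ℂ,
      (∀ (i : Fin (2 ^ p)) (j : Fin (2 ^ q)), (i : ℕ) % 2 ^ q ≠ (j : ℕ) → Λ i j = 0) →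
      ∃ Λ' : Matrix (Fin (2 ^ p)) (Fin (2 ^ q)) ℂ,
        (∀ (i : Fin (2 ^ p)) (j : Fin (2 ^ q)), (i : ℕ) % 2 ^ q ≠ (j : ℕ) → Λ' i j = 0) ∧
        blockKron p q (V q) * Λ * (V q).map (starRingEnd ℂ) =
          V p * Λ' * (V q).map (starRingEnd ℂ)) := by
  have part1 := key p q hqp V hunit hrec p hqp le_rfl
  refine ⟨part1, ?_⟩
  intro Λ hΛ
  refine ⟨(V p).map (starRingEnd ℂ) * blockKron p q (V q) * Λ, ?_, ?_⟩
  · intro i j hij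
    rw [Matrix.mul_apply]
    apply Finset.sum_eq_zero
    intro k _
    by_cases hk : (k : ℕ) % 2 ^ q = (j : ℕ)
    · rw [part1 i k (by rw [hk]; exact hij), zero_mul]
    · rw [hΛ k j hk, mul_zero]
  · have hV : V p * (V p).map (starRingEnd ℂ) = 1 :=
      mul_eq_one_comm.mp (hunit p hqp le_rfl)
    have : V p * ((V p).map (starRingEnd ℂ) * blockKron p q (V q) * Λ) =
        blockKron p q (V q) * Λ := by
      rw [← Matrix.mul_assoc, ← Matrix.mul_assoc, hV, Matrix.one_mul]
    rw [this]

end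
end

section
/- Define the scaled Walsh–Hadamard matrices H_m ∈ ℝ^{2^m × 2^m} recursively by H_0 := (1) and H_{m+1} := (1/√2) [[H_m, H_m], [H_m, −H_m]]. Define the class of recursive symmetric block Toeplitz (RSBT) matrices inductively: every 1 × 1 real matrix is RSBT, and a 2^{m+1} × 2^{m+1} real matrix is RSBT if and only if it has the block form [[A, B], [B, A]] where A and B are 2^m × 2^m RSBT matrices. Then for every m ∈ ℕ and every RSBT matrix K ∈ ℝ^{2^m × 2^m}, the matrix H_m K H_m is diagonal; equivalently, K = H_m Λ H_m for some diagonal matrix Λ ∈ ℝ^{2^m × 2^m}. -/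
open Matrix

noncomputable def Hmat : (m : ℕ) → Matrix (Fin (2 ^ m)) (Fin (2 ^ m)) ℝ
  | 0 => 1
  | m + 1 =>
      (Real.sqrt 2)⁻¹ •
        (Matrix.reindex (sumEquiv m) (sumEquiv m)
          (Matrix.fromBlocks (Hmat m) (Hmat m) (Hmat m) (-(Hmat m))))

inductive IsRSBT : (m : ℕ) → Matrix (Fin (2 ^ m)) (Fin (2 ^ m)) ℝ → Prop
  | base (M : Matrix (Fin (2 ^ 0)) (Fin (2 ^ 0)) ℝ) : IsRSBT 0 M
  | step {m : ℕ} (A B : Matrix (Fin (2 ^ m)) (Fin (2 ^ m)) ℝ) :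
      IsRSBT m A → IsRSBT m B →
      IsRSBT (m + 1) (Matrix.reindex (sumEquiv m) (sumEquiv m) (Matrix.fromBlocks A B B A))

/-!
Conjugating `[[B, C], [C, B]]` by `[[A, A], [A, -A]]` gives `2 • diag(A (B + C) A, A (B - C) A)`.
With `A = H_m` the factor `2` cancels the scaling `(1/√2)²` of `H_{m+1}`, so `H_{m+1} K H_{m+1}`
is block diagonal with blocks `H_m B H_m ± H_m C H_m`, diagonal by induction. The case `B = 1`,
`C = 0` gives `H_m² = 1`, whence `K = H_m (H_m K H_m) H_m`.
-/

lemma fromBlocks_conj_hadamard {n R : Type*} [Fintype n] [Ring R] (A B C : Matrix n n R) :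
    fromBlocks A A A (-A) * fromBlocks B C C B * fromBlocks A A A (-A) =
      (2 : R) • fromBlocks (A * (B + C) * A) 0 0 (A * (B - C) * A) := by
  rw [two_smul, fromBlocks_add, fromBlocks_multiply, fromBlocks_multiply, add_zero]
  congr 1 <;> noncomm_ring

lemma reindex_mul_reindex {n p R : Type*} [Fintype n] [Fintype p] [Semiring R] (e : n ≃ p)
    (M N : Matrix n n R) : reindex e e M * reindex e e N = reindex e e (M * N) :=
  submatrix_mul_equiv M N _ e.symm _

lemma Hmat_succ_conj (m : ℕ) (B C : Matrix (Fin (2 ^ m)) (Fin (2 ^ m)) ℝ) :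
    Hmat (m + 1) * reindex (sumEquiv m) (sumEquiv m) (fromBlocks B C C B) * Hmat (m + 1) =
      reindex (sumEquiv m) (sumEquiv m)
        (fromBlocks (Hmat m * (B + C) * Hmat m) 0 0 (Hmat m * (B - C) * Hmat m)) := by
  have hscale : (Real.sqrt 2)⁻¹ * (Real.sqrt 2)⁻¹ * 2 = 1 := by
    rw [← mul_inv, Real.mul_self_sqrt zero_le_two, inv_mul_cancel₀ two_ne_zero]
  rw [Hmat, Matrix.smul_mul, Matrix.mul_smul, Matrix.smul_mul, smul_smul, reindex_mul_reindex,
    reindex_mul_reindex, fromBlocks_conj_hadamard, reindex_apply, reindex_apply, submatrix_smul,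
    Pi.smul_apply, Pi.smul_apply, smul_smul, hscale, one_smul]

lemma Hmat_mul_self (m : ℕ) : Hmat m * Hmat m = 1 := by
  induction m with
  | zero => simp [Hmat]
  | succ m ih =>
    have h := Hmat_succ_conj m 1 0
    rwa [add_zero, sub_zero, mul_one, ih, fromBlocks_one, reindex_apply, submatrix_one_equiv,
      mul_one] at h

lemma IsRSBT.isDiag_Hmat_conj {m : ℕ} {K : Matrix (Fin (2 ^ m)) (Fin (2 ^ m)) ℝ}
    (hK : IsRSBT m K) : (Hmat m * K * Hmat m).IsDiag := by
  induction hK with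
  | base M => exact isDiag_of_subsingleton (n := Fin 1) _
  | step A B _ _ ihA ihB =>
    rw [Hmat_succ_conj, reindex_apply, mul_add, add_mul, mul_sub, sub_mul]
    exact (isDiag_fromBlocks_iff.mpr ⟨ihA.add ihB, rfl, rfl, ihA.sub ihB⟩).submatrix
      (sumEquiv _).symm.injective

theorem stmt_5 (m : ℕ) (K : Matrix (Fin (2 ^ m)) (Fin (2 ^ m)) ℝ) (hK : IsRSBT m K) :
    (Hmat m * K * Hmat m).IsDiag ∧
    ∃ Λ : Matrix (Fin (2 ^ m)) (Fin (2 ^ m)) ℝ, Λ.IsDiag ∧ K = Hmat m * Λ * Hmat m := by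
  refine ⟨hK.isDiag_Hmat_conj, Hmat m * K * Hmat m, hK.isDiag_Hmat_conj, ?_⟩
  calc K = (Hmat m * Hmat m) * K * (Hmat m * Hmat m) := by rw [Hmat_mul_self, one_mul, mul_one]
    _ = Hmat m * (Hmat m * K * Hmat m) * Hmat m := by simp only [Matrix.mul_assoc]
end

section
/- Let (Ω, 𝒜, 𝔾) and (U, ℬ, 𝕌) be probability spaces and let F ⊆ Ω × U be measurable with respect to the product σ-algebra 𝒜 ⊗ ℬ. Define P(ω) := 𝕌({u : (ω, u) ∈ F}), p(u) := 𝔾({ω : (ω, u) ∈ F}), and P̌ := ∫_U p(u) d𝕌(u). Then ∫_Ω |P(ω) − P̌| d𝔾(ω) ≤ 2 ∫_U p(u)(1 − p(u)) d𝕌(u). Consequently, for any α ∈ (0,1), setting γ̌ := (2/α) ∫_U p(u)(1 − p(u)) d𝕌(u), the interval [max(P̌ − γ̌, 0), min(P̌ + γ̌, 1)] contains P with 𝔾-probability at least 1 − α, i.e., 𝔾({ω : |P(ω) − P̌| > γ̌}) ≤ α. -/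
/-!
Since `P x - P̌ = ∫ (1_s (x, y) - p y) dν(y)`, the deviation `|P x - P̌|` is at most
`∫ |1_s (x, y) - p y| dν(y)`. Integrating over `x` first (Fubini), the inner integral is the mean
absolute deviation of a Bernoulli variable with parameter `p y`, namely `2 p y (1 - p y)`.
The probability bound is then Markov's inequality.
-/

open MeasureTheory

lemma integral_abs_indicator_one_sub_measureReal {α : Type*} [MeasurableSpace α] (μ : Measure α)
    [IsProbabilityMeasure μ] {s : Set α} (hs : MeasurableSet s) :
    ∫ x, |s.indicator 1 x - μ.real s| ∂μ = 2 * μ.real s * (1 - μ.real s) := by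
  set q := μ.real s
  have hq0 : 0 ≤ q := measureReal_nonneg
  have hq1 : q ≤ 1 := measureReal_le_one
  have hsplit : ∀ x, |s.indicator 1 x - q| = s.indicator (fun _ => 1 - 2 * q) x + q := by
    intro x
    by_cases hx : x ∈ s
    · simp only [Set.indicator_of_mem hx, Pi.one_apply, abs_of_nonneg (sub_nonneg.2 hq1)]
      ring
    · simp [Set.indicator_of_notMem hx, abs_of_nonneg hq0]
  simp_rw [hsplit]
  rw [integral_add ((integrable_const _).indicator hs) (integrable_const _),
    integral_indicator_const _ hs, integral_const, probReal_univ]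
  simp only [smul_eq_mul, one_mul]
  ring

lemma abs_measureReal_sub_integral_le_integral_abs {β : Type*} [MeasurableSpace β]
    {ν : Measure β} [IsFiniteMeasure ν] {t : Set β} (ht : MeasurableSet t) {p : β → ℝ}
    (hp : Integrable p ν) :
    |ν.real t - ∫ y, p y ∂ν| ≤ ∫ y, |t.indicator 1 y - p y| ∂ν := by
  have hind : Integrable (t.indicator (1 : β → ℝ)) ν := (integrable_const 1).indicator ht
  rw [← integral_indicator_one ht, ← integral_sub hind hp]
  exact abs_integral_le_integral_abs

lemma measureReal_div_lt_le {α : Type*} [MeasurableSpace α] {μ : Measure α} {f : α → ℝ}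
    (hf0 : 0 ≤ᵐ[μ] f) (hfi : Integrable f μ) {C a : ℝ} (hC : ∫ x, f x ∂μ ≤ C) (ha : 0 < a) :
    μ.real {x | C / a < f x} ≤ a := by
  rcases (integral_nonneg_of_ae hf0 |>.trans hC).eq_or_lt with hC0 | hC0
  · have hf : f =ᵐ[μ] 0 := (integral_eq_zero_iff_of_nonneg_ae hf0 hfi).1
      (le_antisymm (hC.trans hC0.ge) (integral_nonneg_of_ae hf0))
    have hnull : μ {x | C / a < f x} = 0 := by
      refine measure_eq_zero_iff_ae_notMem.2 ?_
      filter_upwards [hf] with x hx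
      simp [hx, ← hC0]
    simp [Measure.real, hnull, ha.le]
  · have hε : 0 < C / a := div_pos hC0 ha
    have hfin : μ {x | C / a ≤ f x} ≠ ⊤ :=
      ne_top_of_le_ne_top (hfi.measure_norm_ge_lt_top hε).ne
        (measure_mono fun x hx => hx.trans (Real.le_norm_self _))
    calc μ.real {x | C / a < f x} ≤ μ.real {x | C / a ≤ f x} :=
          measureReal_mono (Set.ofPred_subset_ofPred.2 fun _ => le_of_lt) hfin
      _ ≤ C / (C / a) :=
          (le_div_iff₀' hε).2 ((mul_meas_ge_le_integral_of_nonneg hf0 hfi _).trans hC)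
      _ = a := div_div_cancel₀ hC0.ne'

section Sections

variable {α β : Type*} [MeasurableSpace α] [MeasurableSpace β]
  {μ : Measure α} {ν : Measure β} {s : Set (α × β)}

lemma integrable_measureReal_prodMk_right [IsFiniteMeasure μ] [IsFiniteMeasure ν]
    (hs : MeasurableSet s) : Integrable (fun y => μ.real {x | (x, y) ∈ s}) ν :=
  .of_bound (measurable_measure_prodMk_right hs).ennreal_toReal.aestronglyMeasurable
    (μ.real Set.univ)
    (ae_of_all _ fun _ => by
      rw [Real.norm_of_nonneg measureReal_nonneg]
      exact measureReal_mono (Set.subset_univ _))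

lemma integral_measureReal_prodMk_right [IsFiniteMeasure μ] [SFinite ν] (hs : MeasurableSet s) :
    ∫ y, μ.real {x | (x, y) ∈ s} ∂ν = (μ.prod ν).real s := by
  rw [Measure.real, Measure.prod_apply_symm hs]
  exact integral_toReal (measurable_measure_prodMk_right hs).aemeasurable
    (ae_of_all _ fun _ => measure_lt_top _ _)

lemma integrable_abs_measureReal_prodMk_left_sub
    [IsProbabilityMeasure μ] [IsProbabilityMeasure ν] (hs : MeasurableSet s) :
    Integrable (fun x => |ν.real {y | (x, y) ∈ s} - ∫ y, μ.real {x' | (x', y) ∈ s} ∂ν|) μ := by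
  refine .of_bound
    ((measurable_measure_prodMk_left hs).ennreal_toReal.sub_const _).abs.aestronglyMeasurable 1
    (ae_of_all _ fun x => ?_)
  rw [Real.norm_eq_abs, abs_abs, integral_measureReal_prodMk_right hs]
  exact abs_sub_le_of_nonneg_of_le measureReal_nonneg measureReal_le_one
    measureReal_nonneg measureReal_le_one

theorem integral_abs_measureReal_prodMk_left_sub_le [IsProbabilityMeasure μ] [IsFiniteMeasure ν]
    (hs : MeasurableSet s) :
    ∫ x, |ν.real {y | (x, y) ∈ s} - ∫ y, μ.real {x' | (x', y) ∈ s} ∂ν| ∂μ ≤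
      2 * ∫ y, μ.real {x | (x, y) ∈ s} * (1 - μ.real {x | (x, y) ∈ s}) ∂ν := by
  set p : β → ℝ := fun y => μ.real {x | (x, y) ∈ s}
  have hp : Integrable p ν := integrable_measureReal_prodMk_right hs
  have hdev : Integrable (fun z : α × β => |s.indicator 1 z - p z.2|) (μ.prod ν) :=
    (((integrable_const 1).indicator hs).sub (hp.comp_snd μ)).abs
  calc ∫ x, |ν.real {y | (x, y) ∈ s} - ∫ y, p y ∂ν| ∂μ
      ≤ ∫ x, ∫ y, |s.indicator 1 (x, y) - p y| ∂ν ∂μ :=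
        integral_mono_of_nonneg (ae_of_all _ fun _ => abs_nonneg _) hdev.integral_prod_left
          (ae_of_all _ fun _ => abs_measureReal_sub_integral_le_integral_abs
            (measurable_prodMk_left hs) hp)
    _ = ∫ y, ∫ x, |s.indicator 1 (x, y) - p y| ∂μ ∂ν := integral_integral_swap hdev
    _ = ∫ y, 2 * p y * (1 - p y) ∂ν :=
        integral_congr_ae (ae_of_all _ fun _ =>
          integral_abs_indicator_one_sub_measureReal μ (measurable_prodMk_right hs))
    _ = 2 * ∫ y, p y * (1 - p y) ∂ν := by
        rw [← integral_const_mul]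
        simp_rw [mul_assoc]

end Sections

theorem stmt_16 {Ω U : Type*} [MeasurableSpace Ω] [MeasurableSpace U]
    (G : Measure Ω) (Mu : Measure U)
    [IsProbabilityMeasure G] [IsProbabilityMeasure Mu]
    (F : Set (Ω × U)) (hF : MeasurableSet F) :
    ((∫ ω, |(Mu {u | (ω, u) ∈ F}).toReal -
        ∫ u, (G {ω' | (ω', u) ∈ F}).toReal ∂Mu| ∂G) ≤
      2 * ∫ u, (G {ω' | (ω', u) ∈ F}).toReal * (1 - (G {ω' | (ω', u) ∈ F}).toReal) ∂Mu) ∧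
    (∀ a : ℝ, 0 < a → a < 1 →
      (G {ω | 2 / a *
          (∫ u, (G {ω' | (ω', u) ∈ F}).toReal * (1 - (G {ω' | (ω', u) ∈ F}).toReal) ∂Mu) <
          |(Mu {u | (ω, u) ∈ F}).toReal -
            ∫ u, (G {ω' | (ω', u) ∈ F}).toReal ∂Mu|}).toReal ≤ a) := by
  have hmean := integral_abs_measureReal_prodMk_left_sub_le (μ := G) (ν := Mu) hF
  refine ⟨hmean, fun a ha _ => ?_⟩
  rw [div_mul_eq_mul_div]
  exact measureReal_div_lt_le (ae_of_all _ fun _ => abs_nonneg _)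
    (integrable_abs_measureReal_prodMk_left_sub hF) hmean ha
end

section
/- Let (Ω, 𝒜, 𝔾) and (U, ℬ, 𝕌) be probability spaces and let F ⊆ Ω × U be measurable with respect to the product σ-algebra 𝒜 ⊗ ℬ. Define P(ω) := 𝕌({u : (ω, u) ∈ F}) and p(u) := 𝔾({ω : (ω, u) ∈ F}). Let F̂ := {u ∈ U : p(u) ≥ 1/2} and P̂ := 𝕌(F̂). Then ∫_Ω |P(ω) − P̂| d𝔾(ω) ≤ ∫_U min(p(u), 1 − p(u)) d𝕌(u). Consequently, for any α ∈ (0,1), setting γ̂ := (1/α) ∫_U min(p(u), 1 − p(u)) d𝕌(u), the interval [max(P̂ − γ̂, 0), min(P̂ + γ̂, 1)] contains P with 𝔾-probability at least 1 − α, i.e., 𝔾({ω : |P(ω) − P̂| > γ̂}) ≤ α. -/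
open MeasureTheory
open scoped ENNReal symmDiff

theorem stmt_17 {Ω U : Type*} [MeasurableSpace Ω] [MeasurableSpace U]
    (G : Measure Ω) (Mu : Measure U)
    [IsProbabilityMeasure G] [IsProbabilityMeasure Mu]
    (F : Set (Ω × U)) (hF : MeasurableSet F) :
    ((∫ ω, |(Mu {u | (ω, u) ∈ F}).toReal -
        (Mu {u | 1 / 2 ≤ (G {ω' | (ω', u) ∈ F}).toReal}).toReal| ∂G) ≤
      ∫ u, min (G {ω' | (ω', u) ∈ F}).toReal (1 - (G {ω' | (ω', u) ∈ F}).toReal) ∂Mu) ∧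
    (∀ a : ℝ, 0 < a → a < 1 →
      (G {ω | 1 / a *
          (∫ u, min (G {ω' | (ω', u) ∈ F}).toReal
            (1 - (G {ω' | (ω', u) ∈ F}).toReal) ∂Mu) <
          |(Mu {u | (ω, u) ∈ F}).toReal -
            (Mu {u | 1 / 2 ≤ (G {ω' | (ω', u) ∈ F}).toReal}).toReal|}).toReal ≤ a) := by
  classical
  set p : U → ℝ≥0∞ := fun u => G {ω' | (ω', u) ∈ F} with hpdef
  set P : Ω → ℝ≥0∞ := fun ω => Mu {u | (ω, u) ∈ F} with hPdef
  set Fh : Set U := {u | 1 / 2 ≤ (p u).toReal} with hFhdef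
  have hpmeas : Measurable p := measurable_measure_prodMk_right hF
  have hPmeas : Measurable P := measurable_measure_prodMk_left hF
  have hFhmeas : MeasurableSet Fh :=
    measurableSet_le measurable_const hpmeas.ennreal_toReal
  set D : Set (Ω × U) := symmDiff F (Set.univ ×ˢ Fh) with hDdef
  have hDmeas : MeasurableSet D := hF.symmDiff (MeasurableSet.univ.prod hFhmeas)
  -- sections
  have hDsec : ∀ ω, (Prod.mk ω ⁻¹' D) = symmDiff {u | (ω, u) ∈ F} Fh := by
    intro ω; ext u
    simp [hDdef, Set.mem_symmDiff]
  have hsecF : ∀ u, MeasurableSet {ω' | (ω', u) ∈ F} := fun u =>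
    measurable_prodMk_right hF
  have hDsec' : ∀ u, ((fun ω' => (ω', u)) ⁻¹' D) =
      if u ∈ Fh then {ω' | (ω', u) ∈ F}ᶜ else {ω' | (ω', u) ∈ F} := by
    intro u; ext ω
    by_cases hu : u ∈ Fh <;> simp [hDdef, Set.mem_symmDiff, hu]
  -- pointwise key bound
  have key1 : ∀ ω, |(P ω).toReal - (Mu Fh).toReal| ≤ (Mu (Prod.mk ω ⁻¹' D)).toReal := by
    intro ω
    rw [hDsec ω, abs_sub_le_iff]
    constructor
    · have h1 : Mu {u | (ω, u) ∈ F} ≤ Mu Fh + Mu (symmDiff {u | (ω, u) ∈ F} Fh) := by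
        refine le_trans (measure_mono ?_) (measure_union_le _ _)
        intro x hx
        by_cases hB : x ∈ Fh
        · exact Or.inl hB
        · exact Or.inr (Set.mem_symmDiff.mpr (Or.inl ⟨hx, hB⟩))
      have := ENNReal.toReal_le_add h1 (measure_ne_top _ _) (measure_ne_top _ _)
      simpa [hPdef, add_comm] using sub_le_iff_le_add.mpr this
    · have h1 : Mu Fh ≤ Mu {u | (ω, u) ∈ F} + Mu (symmDiff {u | (ω, u) ∈ F} Fh) := by
        refine le_trans (measure_mono ?_) (measure_union_le _ _)
        intro x hx
        by_cases hB : x ∈ {u | (ω, u) ∈ F}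
        · exact Or.inl hB
        · exact Or.inr (Set.mem_symmDiff.mpr (Or.inr ⟨hx, hB⟩))
      have := ENNReal.toReal_le_add h1 (measure_ne_top _ _) (measure_ne_top _ _)
      simpa [hPdef, add_comm] using sub_le_iff_le_add.mpr this
  -- integrability
  have hf2meas : Measurable fun ω => (Mu (Prod.mk ω ⁻¹' D)).toReal :=
    (measurable_measure_prodMk_left hDmeas).ennreal_toReal
  have hf2int : Integrable (fun ω => (Mu (Prod.mk ω ⁻¹' D)).toReal) G := by
    refine (integrable_const (1 : ℝ)).mono' hf2meas.aestronglyMeasurable ?_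
    filter_upwards with ω
    rw [Real.norm_eq_abs, abs_of_nonneg ENNReal.toReal_nonneg]
    exact ENNReal.toReal_le_of_le_ofReal zero_le_one (by simpa using prob_le_one)
  have hf1meas : Measurable fun ω => |(P ω).toReal - (Mu Fh).toReal| :=
    (hPmeas.ennreal_toReal.sub measurable_const).abs
  have hf1int : Integrable (fun ω => |(P ω).toReal - (Mu Fh).toReal|) G := by
    refine hf2int.mono' hf1meas.aestronglyMeasurable ?_
    filter_upwards with ω
    rw [Real.norm_eq_abs, abs_abs]
    exact key1 ω
  -- equalities
  have eq1 : ∫ ω, (Mu (Prod.mk ω ⁻¹' D)).toReal ∂G = ((G.prod Mu) D).toReal := by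
    rw [integral_toReal ((measurable_measure_prodMk_left hDmeas).aemeasurable)
      (Filter.Eventually.of_forall fun ω => lt_of_le_of_lt prob_le_one ENNReal.one_lt_top),
      Measure.prod_apply hDmeas]
  have hsec_toReal : ∀ u, (G ((fun ω' => (ω', u)) ⁻¹' D)).toReal =
      min (p u).toReal (1 - (p u).toReal) := by
    intro u
    rw [hDsec' u]
    by_cases hu : u ∈ Fh
    · rw [if_pos hu]
      have hc : G {ω' | (ω', u) ∈ F}ᶜ = 1 - p u := by
        rw [measure_compl (hsecF u) (measure_ne_top _ _), measure_univ]
      rw [hc, ENNReal.toReal_sub_of_le prob_le_one ENNReal.one_ne_top, ENNReal.toReal_one]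
      have hhalf : (1 : ℝ) / 2 ≤ (p u).toReal := hu
      rw [min_eq_right (by linarith)]
    · rw [if_neg hu]
      have hhalf : (p u).toReal < 1 / 2 := lt_of_not_ge hu
      rw [min_eq_left (by linarith)]
  have eq2 : ((G.prod Mu) D).toReal = ∫ u, min (p u).toReal (1 - (p u).toReal) ∂Mu := by
    rw [Measure.prod_apply_symm hDmeas,
      ← integral_toReal ((measurable_measure_prodMk_right hDmeas).aemeasurable)
        (Filter.Eventually.of_forall fun u => lt_of_le_of_lt prob_le_one ENNReal.one_lt_top)]
    exact integral_congr_ae (Filter.Eventually.of_forall fun u => hsec_toReal u)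
  have main : (∫ ω, |(P ω).toReal - (Mu Fh).toReal| ∂G) ≤
      ∫ u, min (p u).toReal (1 - (p u).toReal) ∂Mu := by
    calc (∫ ω, |(P ω).toReal - (Mu Fh).toReal| ∂G)
        ≤ ∫ ω, (Mu (Prod.mk ω ⁻¹' D)).toReal ∂G :=
          integral_mono hf1int hf2int key1
      _ = _ := by rw [eq1, eq2]
  refine ⟨main, ?_⟩
  intro a ha0 ha1
  set I : ℝ := ∫ u, min (p u).toReal (1 - (p u).toReal) ∂Mu with hIdef
  have hI0 : 0 ≤ I := by
    apply integral_nonneg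
    intro u
    have h1 : (p u).toReal ≤ 1 :=
      ENNReal.toReal_le_of_le_ofReal zero_le_one (by simpa using prob_le_one)
    simp only [Pi.zero_apply]
    exact le_min ENNReal.toReal_nonneg (by linarith)
  rcases eq_or_lt_of_le hI0 with hI | hI
  · -- I = 0 : X = 0 a.e.
    have hX0 : (∫ ω, |(P ω).toReal - (Mu Fh).toReal| ∂G) = 0 :=
      le_antisymm (by rw [← hI] at main; exact main) (integral_nonneg fun ω => abs_nonneg _)
    have hae : (fun ω => |(P ω).toReal - (Mu Fh).toReal|) =ᵐ[G] 0 :=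
      (integral_eq_zero_iff_of_nonneg (fun ω => abs_nonneg _) hf1int).mp hX0
    have h0 : G {ω | |(P ω).toReal - (Mu Fh).toReal| ≠ 0} = 0 := by
      have := ae_iff.mp hae
      simpa using this
    have hnull : G {ω | 1 / a * I < |(P ω).toReal - (Mu Fh).toReal|} = 0 := by
      refine measure_mono_null ?_ h0
      intro ω h
      have hz : 1 / a * I = 0 := by rw [← hI, mul_zero]
      have hlt : (0 : ℝ) < |(P ω).toReal - (Mu Fh).toReal| := by
        have h' : 1 / a * I < |(P ω).toReal - (Mu Fh).toReal| := h
        linarith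
      exact ne_of_gt hlt
    rw [hnull]
    simpa using ha0.le
  · -- I > 0 : Markov
    have hc : 0 < 1 / a * I := mul_pos (by positivity) hI
    have markov := mul_meas_ge_le_integral_of_nonneg
      (Filter.Eventually.of_forall fun ω => abs_nonneg ((P ω).toReal - (Mu Fh).toReal))
      hf1int (1 / a * I)
    have hsub : G {ω | 1 / a * I < |(P ω).toReal - (Mu Fh).toReal|} ≤
        G {ω | 1 / a * I ≤ |(P ω).toReal - (Mu Fh).toReal|} :=
      measure_mono fun ω (h : 1 / a * I < |(P ω).toReal - (Mu Fh).toReal|) =>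
        Set.mem_setOf.mpr (le_of_lt h)
    have h1 : (G {ω | 1 / a * I < |(P ω).toReal - (Mu Fh).toReal|}).toReal ≤
        (G {ω | 1 / a * I ≤ |(P ω).toReal - (Mu Fh).toReal|}).toReal :=
      ENNReal.toReal_mono (measure_ne_top _ _) hsub
    have h2 : 1 / a * I * (G {ω | 1 / a * I ≤ |(P ω).toReal - (Mu Fh).toReal|}).toReal ≤ I :=
      le_trans markov main
    have h3 : (G {ω | 1 / a * I ≤ |(P ω).toReal - (Mu Fh).toReal|}).toReal ≤ a := by
      rw [← le_div_iff₀' hc] at h2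
      calc _ ≤ I / (1 / a * I) := h2
        _ = a := by field_simp
    exact le_trans h1 h3
end

section
/- Let L ∈ ℕ, let Σ ∈ ℝ^{L × L} be symmetric positive semidefinite, and let ρ, χ ∈ ℝ^L be such that Σ + ρρᵀ is positive definite. Define MSE(ω) := ωᵀ Σ ω + (ρᵀ(ω − χ))² for ω ∈ ℝ^L. Then the unique minimizer of MSE over ℝ^L is ω* = (ρᵀχ) · (Σ + ρρᵀ)^{−1} ρ, and the minimal value is MSE(ω*) = (ρᵀχ)² · (1 − ρᵀ (Σ + ρρᵀ)^{−1} ρ). -/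
/-!
Writing `A = S + ρ ρᵀ` and `c = ρᵀχ`, the MSE is the quadratic `ωᵀAω - 2c ρᵀω + c²`.
Since `A ω* = c ρ`, completing the square gives
`MSE(ω) = (ω - ω*)ᵀ A (ω - ω*) + c² (1 - ρᵀA⁻¹ρ)`, and positive definiteness of `A` does the rest.
-/

open Matrix

noncomputable def MSEfn {L : ℕ} (S : Matrix (Fin L) (Fin L) ℝ) (ρ χ : Fin L → ℝ)
    (ω : Fin L → ℝ) : ℝ :=
  ω ⬝ᵥ (S *ᵥ ω) + (ρ ⬝ᵥ (ω - χ)) ^ 2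

noncomputable def omegaStar {L : ℕ} (S : Matrix (Fin L) (Fin L) ℝ) (ρ χ : Fin L → ℝ) :
    Fin L → ℝ :=
  (ρ ⬝ᵥ χ) • ((S + Matrix.vecMulVec ρ ρ)⁻¹ *ᵥ ρ)

namespace Matrix

variable {n R : Type*} [Fintype n] [CommRing R]

lemma IsSymm.dotProduct_mulVec_comm {A : Matrix n n R} (hA : A.IsSymm) (u v : n → R) :
    u ⬝ᵥ (A *ᵥ v) = v ⬝ᵥ (A *ᵥ u) := by
  rw [dotProduct_mulVec, ← mulVec_transpose, hA.eq, dotProduct_comm]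

lemma IsSymm.dotProduct_mulVec_sub_sub {A : Matrix n n R} (hA : A.IsSymm) {w b : n → R}
    (hw : A *ᵥ w = b) (v : n → R) :
    (v - w) ⬝ᵥ (A *ᵥ (v - w)) = v ⬝ᵥ (A *ᵥ v) - 2 * (b ⬝ᵥ v) + b ⬝ᵥ w := by
  have hvw : v ⬝ᵥ (A *ᵥ w) = b ⬝ᵥ v := by rw [hw, dotProduct_comm]
  have hww : w ⬝ᵥ (A *ᵥ w) = b ⬝ᵥ w := by rw [hw, dotProduct_comm]
  rw [mulVec_sub, dotProduct_sub, sub_dotProduct, sub_dotProduct, hA.dotProduct_mulVec_comm w v,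
    hvw, hww]
  ring

end Matrix

section MSE

variable {L : ℕ} (S : Matrix (Fin L) (Fin L) ℝ) (ρ χ : Fin L → ℝ)

lemma MSEfn_eq_quadratic (ω : Fin L → ℝ) :
    MSEfn S ρ χ ω =
      ω ⬝ᵥ ((S + vecMulVec ρ ρ) *ᵥ ω) - 2 * ((ρ ⬝ᵥ χ) • ρ ⬝ᵥ ω) + (ρ ⬝ᵥ χ) ^ 2 := by
  rw [MSEfn, add_mulVec, vecMulVec_mulVec, op_smul_eq_smul, dotProduct_add, dotProduct_smul,
    smul_dotProduct, dotProduct_sub, smul_eq_mul, smul_eq_mul, dotProduct_comm ω ρ]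
  ring

variable {S ρ}

lemma mulVec_omegaStar (h : IsUnit (S + vecMulVec ρ ρ).det) :
    (S + vecMulVec ρ ρ) *ᵥ omegaStar S ρ χ = (ρ ⬝ᵥ χ) • ρ := by
  rw [omegaStar, mulVec_smul, mulVec_mulVec, mul_nonsing_inv _ h, one_mulVec]

lemma MSEfn_eq_dotProduct_mulVec_sub_add (hsymm : (S + vecMulVec ρ ρ).IsSymm)
    (h : IsUnit (S + vecMulVec ρ ρ).det) (ω : Fin L → ℝ) :
    MSEfn S ρ χ ω =
      (ω - omegaStar S ρ χ) ⬝ᵥ ((S + vecMulVec ρ ρ) *ᵥ (ω - omegaStar S ρ χ)) +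
        (ρ ⬝ᵥ χ) ^ 2 * (1 - ρ ⬝ᵥ ((S + vecMulVec ρ ρ)⁻¹ *ᵥ ρ)) := by
  rw [hsymm.dotProduct_mulVec_sub_sub (mulVec_omegaStar χ h), MSEfn_eq_quadratic, omegaStar]
  simp only [dotProduct_smul, smul_dotProduct, smul_eq_mul]
  ring

end MSE

theorem stmt_18_general (L : ℕ) (S : Matrix (Fin L) (Fin L) ℝ)
    (ρ χ : Fin L → ℝ) (hpd : (S + Matrix.vecMulVec ρ ρ).PosDef) :
    (∀ ω : Fin L → ℝ, ω ≠ omegaStar S ρ χ → MSEfn S ρ χ (omegaStar S ρ χ) < MSEfn S ρ χ ω) ∧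
    MSEfn S ρ χ (omegaStar S ρ χ) =
      (ρ ⬝ᵥ χ) ^ 2 * (1 - ρ ⬝ᵥ ((S + Matrix.vecMulVec ρ ρ)⁻¹ *ᵥ ρ)) := by
  have hsymm : (S + vecMulVec ρ ρ).IsSymm := isHermitian_iff_isSymm.mp hpd.isHermitian
  have hunit : IsUnit (S + vecMulVec ρ ρ).det := (isUnit_iff_isUnit_det _).mp hpd.isUnit
  have hmin : MSEfn S ρ χ (omegaStar S ρ χ) =
      (ρ ⬝ᵥ χ) ^ 2 * (1 - ρ ⬝ᵥ ((S + vecMulVec ρ ρ)⁻¹ *ᵥ ρ)) := by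
    simp [MSEfn_eq_dotProduct_mulVec_sub_add χ hsymm hunit]
  refine ⟨fun ω hω => ?_, hmin⟩
  rw [MSEfn_eq_dotProduct_mulVec_sub_add χ hsymm hunit ω, hmin]
  exact lt_add_of_pos_left _ (hpd.dotProduct_mulVec_pos (sub_ne_zero.mpr hω))

theorem stmt_18 (L : ℕ) (S : Matrix (Fin L) (Fin L) ℝ) (hS : S.PosSemidef)
    (ρ χ : Fin L → ℝ) (hpd : (S + Matrix.vecMulVec ρ ρ).PosDef) :
    (∀ ω : Fin L → ℝ, ω ≠ omegaStar S ρ χ → MSEfn S ρ χ (omegaStar S ρ χ) < MSEfn S ρ χ ω) ∧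
    MSEfn S ρ χ (omegaStar S ρ χ) =
      (ρ ⬝ᵥ χ) ^ 2 * (1 - ρ ⬝ᵥ ((S + Matrix.vecMulVec ρ ρ)⁻¹ *ᵥ ρ)) :=
  stmt_18_general L S ρ χ hpd
end
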